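/- arXiv:math/0205161 — 4 statements merged into one kernel-verified Lean document; each statement's English description precedes it below -/
import Mathlib

section
/- Let R be a commutative Noetherian ring, J ⊆ I ideals with R/J Cohen-Macaulay and codim I = codim J + 1 (i.e., ht I = ht J + 1), and let f ∈ R be an element with J : f = J. Define Ĩ = J + f·I. Then there is a short exact sequence of R-modules 0 → J → J ⊕ I → Ĩ → 0, where the first map sends j to (f·j, j) and the second sends (j, i) to j − f·i. (This is the exact sequence underlying basic double linkage.) -/
/-- The height (codimension) of an ideal: the infimum, over primes `p` containing `I`,
of the Krull dimension of the set of primes below `p`. -/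
noncomputable def idealHeight {R : Type*} [CommRing R] (I : Ideal R) : WithBot ℕ∞ :=
  ⨅ p : {p : PrimeSpectrum R // I ≤ p.asIdeal},
    Order.krullDim {q : PrimeSpectrum R // q ≤ p.1}

/-- The depth (grade) of an ideal `I` on a module `M`: the supremum of the lengths of
`M`-regular sequences consisting of elements of `I`. -/
noncomputable def moduleDepth {R : Type*} [CommRing R] (I : Ideal R)
    (M : Type*) [AddCommGroup M] [Module R M] : ℕ∞ :=
  sSup {n : ℕ∞ | ∃ rs : List R, (rs.length : ℕ∞) = n ∧ (∀ r ∈ rs, r ∈ I) ∧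
    RingTheory.Sequence.IsRegular M rs}

/-- A Noetherian ring is Cohen-Macaulay iff for every proper ideal its grade equals
its height. -/
def IsCohenMacaulayRing (A : Type*) [CommRing A] : Prop :=
  ∀ I : Ideal A, I ≠ ⊤ → (moduleDepth I A : WithBot ℕ∞) = idealHeight I

/-- Basic double linkage: if `J ⊆ I`, `R/J` is Cohen-Macaulay, `ht I = ht J + 1`, and
`J : f = J`, then with `Ĩ = J + f·I` there is a short exact sequence
`0 → J → J ⊕ I → Ĩ → 0`, `j ↦ (f·j, j)`, `(j, i) ↦ j − f·i`. -/
theorem stmt_4 {R : Type*} [CommRing R] [IsNoetherianRing R]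
    (I J : Ideal R) (hJI : J ≤ I) (f : R)
    (hCM : IsCohenMacaulayRing (R ⧸ J))
    (hht : idealHeight I = idealHeight J + 1)
    (hf : Submodule.colon J (Ideal.span {f}) = J) :
    ∃ (φ : J →ₗ[R] J × I) (ψ : J × I →ₗ[R] (J + Ideal.span {f} * I : Ideal R)),
      (∀ x : J, ((φ x).1 : R) = f * (x : R) ∧ ((φ x).2 : R) = (x : R)) ∧
      (∀ p : J × I, (ψ p : R) = (p.1 : R) - f * (p.2 : R)) ∧
      Function.Injective φ ∧ Function.Exact φ ψ ∧ Function.Surjective ψ := by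
  set K : Ideal R := J + Ideal.span {f} * I with hK
  have hmem : ∀ p : J × I, (p.1 : R) - f * (p.2 : R) ∈ K := by
    intro p
    exact sub_mem (Submodule.mem_sup_left p.1.2)
      (Submodule.mem_sup_right
        (Ideal.mul_mem_mul (Ideal.mem_span_singleton_self f) p.2.2))
  refine ⟨LinearMap.prod (f • LinearMap.id) (Submodule.inclusion hJI),
    { toFun := fun p => ⟨(p.1 : R) - f * (p.2 : R), hmem p⟩
      map_add' := by
        intro p q
        apply Subtype.ext
        simp only [Prod.fst_add, Prod.snd_add, Submodule.coe_add]
        ring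
      map_smul' := by
        intro r p
        apply Subtype.ext
        simp [Submodule.coe_smul, smul_eq_mul]
        ring }, ?_, ?_, ?_, ?_, ?_⟩
  · intro x
    exact ⟨rfl, rfl⟩
  · intro p
    rfl
  · intro x y hxy
    have : ((x : R)) = (y : R) := congrArg (fun z => ((z.2 : I) : R)) hxy
    exact Subtype.ext this
  · intro p
    constructor
    · intro hp
      have h0 : (p.1 : R) - f * (p.2 : R) = 0 := congrArg Subtype.val hp
      have hfi : f * (p.2 : R) ∈ J := by
        have := p.1.2
        rwa [sub_eq_zero.mp h0] at this
      have hi2 : (p.2 : R) ∈ J := by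
        have h2 : (p.2 : R) ∈ Submodule.colon J (Ideal.span {f}) :=
          Submodule.mem_colon_span_singleton.mpr (by rw [smul_eq_mul, mul_comm]; exact hfi)
        rwa [hf] at h2
      refine ⟨⟨(p.2 : R), hi2⟩, ?_⟩
      have h1 : (p.1 : R) = f * (p.2 : R) := sub_eq_zero.mp h0
      apply Prod.ext
      · exact Subtype.ext (by simpa [smul_eq_mul] using h1.symm)
      · exact Subtype.ext rfl
    · rintro ⟨x, rfl⟩
      apply Subtype.ext
      show (f • (x : R)) - f * ((Submodule.inclusion hJI x : I) : R) = 0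
      simp [smul_eq_mul]
  · rintro ⟨z, hz⟩
    rw [hK] at hz
    obtain ⟨j, hj, s, hs, rfl⟩ := Submodule.mem_sup.mp hz
    obtain ⟨i, hi, rfl⟩ := Ideal.mem_span_singleton_mul.mp hs
    refine ⟨(⟨j, hj⟩, ⟨-i, neg_mem hi⟩), ?_⟩
    apply Subtype.ext
    show j - f * (-i) = j + f * i
    ring
end

section
/- Let R = K[x₀,…,xₙ] be a polynomial ring over a field, and let J ⊆ I be homogeneous ideals with R/J Cohen-Macaulay, ht I = ht J + 1, and let f be a homogeneous element of degree d with J : f = J. Set Ĩ = J + f·I. Then ht Ĩ = ht I. -/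
open Order

section IicKrull
variable {α : Type*} [PartialOrder α]

lemma myKrullDim_Iic (a : α) :
    Order.krullDim {q : α // q ≤ a} = (Order.height a : WithBot ℕ∞) := by
  have : OrderTop {q : α // q ≤ a} := { top := ⟨a, le_rfl⟩, le_top := fun b => b.2 }
  rw [← Order.height_top_eq_krullDim]
  have ha : ((⊤ : {q : α // q ≤ a}) : α) = a :=
    le_antisymm (⊤ : {q : α // q ≤ a}).2
      (Subtype.coe_le_coe.mpr (le_top (a := (⟨a, le_rfl⟩ : {q : α // q ≤ a}))))
  congr 1
  apply le_antisymm
  · conv_rhs => rw [← ha]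
    exact Order.height_le_height_apply_of_strictMono
      (fun q : {q : α // q ≤ a} => q.1) (fun _ _ h => h) ⊤
  · apply Order.height_le
    intro p hlast
    have hmem : ∀ i, p i ≤ a := fun i => hlast ▸ p.monotone (Fin.le_last i)
    let q : LTSeries {q : α // q ≤ a} :=
      ⟨p.length, fun i => ⟨p i, hmem i⟩, fun i => p.step i⟩
    calc (p.length : ℕ∞) = q.length := rfl
      _ ≤ Order.height q.last := Order.length_le_height_last
      _ ≤ Order.height (⊤ : {q : α // q ≤ a}) := Order.height_mono le_top
end IicKrull

attribute [local instance] MvPolynomial.gradedAlgebra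

lemma idealHeight_eq {R : Type*} [CommRing R] (I : Ideal R) :
    idealHeight I = ⨅ p : {p : PrimeSpectrum R // I ≤ p.asIdeal},
      (Order.height p.1 : WithBot ℕ∞) := by
  simp only [idealHeight, myKrullDim_Iic]

lemma idealHeight_le {R : Type*} [CommRing R] {I : Ideal R} (p : PrimeSpectrum R)
    (h : I ≤ p.asIdeal) : idealHeight I ≤ (Order.height p : WithBot ℕ∞) := by
  rw [idealHeight_eq]
  exact iInf_le (fun p : {p : PrimeSpectrum R // I ≤ p.asIdeal} =>
    (Order.height p.1 : WithBot ℕ∞)) ⟨p, h⟩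

lemma idealHeight_mono {R : Type*} [CommRing R] {I I' : Ideal R} (h : I ≤ I') :
    idealHeight I ≤ idealHeight I' := by
  rw [idealHeight_eq, idealHeight_eq]
  exact le_iInf fun p => iInf_le (fun p : {p : PrimeSpectrum R // I ≤ p.asIdeal} =>
    (Order.height p.1 : WithBot ℕ∞)) ⟨p.1, le_trans h p.2⟩

set_option maxHeartbeats 1000000 in
set_option synthInstance.maxHeartbeats 400000 in
/-- Basic double linkage preserves the codimension: if `J ⊆ I` are homogeneous ideals
of `R = K[x₀,…,xₙ]` with `R/J` Cohen-Macaulay, `ht I = ht J + 1`, and `f` is a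
homogeneous element of degree `d` with `J : f = J`, then `ht (J + f·I) = ht I`. -/
theorem stmt_5 {K : Type*} [Field K] (n : ℕ) (d : ℕ)
    (I J : Ideal (MvPolynomial (Fin (n + 1)) K))
    (hIhom : I.IsHomogeneous (MvPolynomial.homogeneousSubmodule (Fin (n + 1)) K))
    (hJhom : J.IsHomogeneous (MvPolynomial.homogeneousSubmodule (Fin (n + 1)) K))
    (hJI : J ≤ I)
    (hCM : IsCohenMacaulayRing (MvPolynomial (Fin (n + 1)) K ⧸ J))
    (hht : idealHeight I = idealHeight J + 1)
    (f : MvPolynomial (Fin (n + 1)) K) (hfhom : f.IsHomogeneous d)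
    (hf : Submodule.colon J (Ideal.span {f}) = J) :
    idealHeight (J + Ideal.span {f} * I) = idealHeight I := by
  set T := J + Ideal.span {f} * I with hT
  have hJT : J ≤ T := le_sup_left
  have hTI : T ≤ I := sup_le hJI Ideal.mul_le_right
  have h2 : idealHeight T ≤ idealHeight I := idealHeight_mono hTI
  by_cases hbot : idealHeight J = ⊥
  · refine le_antisymm h2 ?_
    rw [hht, hbot, WithBot.bot_add]
    exact bot_le
  obtain ⟨c, hJc⟩ := WithBot.ne_bot_iff_exists.mp hbot
  by_cases hctop : c = ⊤
  · refine le_antisymm h2 ?_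
    have hIt : idealHeight I = (((⊤ : ℕ∞)) : WithBot ℕ∞) := by
      rw [hht, ← hJc, hctop, ← WithBot.coe_one, ← WithBot.coe_add, top_add]
    rw [hIt]
    calc (((⊤ : ℕ∞)) : WithBot ℕ∞) = idealHeight J := by rw [← hJc, hctop]
      _ ≤ idealHeight T := idealHeight_mono hJT
  obtain ⟨m, hcm⟩ := WithTop.ne_top_iff_exists.mp hctop
  have hJ : idealHeight J = (((m : ℕ∞)) : WithBot ℕ∞) := by
    rw [← hJc, ← hcm]
    rfl

  refine le_antisymm h2 ?_
  rw [hht, hJ, idealHeight_eq]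
  refine le_iInf ?_
  rintro ⟨p, hpT⟩
  show ((m : ℕ∞) : WithBot ℕ∞) + 1 ≤ ((Order.height p : ℕ∞) : WithBot ℕ∞)
  have hcoe : ((m : ℕ∞) : WithBot ℕ∞) + 1 = (((m : ℕ∞) + 1 : ℕ∞) : WithBot ℕ∞) := by
    rw [← WithBot.coe_one, ← WithBot.coe_add]
  rw [hcoe, WithBot.coe_le_coe]
  have hJp : J ≤ p.asIdeal := le_trans hJT hpT
  have hmle : (m : ℕ∞) ≤ Order.height p := by
    have := idealHeight_le p hJp
    rw [hJ] at this
    exact_mod_cast this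
  by_contra hlt
  push_neg at hlt
  have hple : Order.height p ≤ (m : ℕ∞) :=
    (ENat.lt_add_one_iff (by exact_mod_cast WithTop.coe_ne_top)).mp hlt
  have hpm : Order.height p = (m : ℕ∞) := le_antisymm hple hmle
  -- f ∈ p or I ≤ p
  have hmul : Ideal.span {f} * I ≤ p.asIdeal := le_trans le_sup_right hpT
  rcases (Ideal.IsPrime.mul_le p.2).mp hmul with hfp | hIp
  swap
  · -- I ≤ p : contradiction with ht I = m + 1
    have hle := idealHeight_le p hIp
    rw [hht, hJ, hpm, hcoe, WithBot.coe_le_coe] at hle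
    exact absurd hle (not_le.mpr ((ENat.lt_add_one_iff (by exact_mod_cast WithTop.coe_ne_top)).mpr le_rfl))
  have hfp : f ∈ p.asIdeal := hfp (Ideal.mem_span_singleton_self f)
  -- p is minimal over J
  have hmin : ∀ Q : PrimeSpectrum (MvPolynomial (Fin (n + 1)) K),
      J ≤ Q.asIdeal → Q ≤ p → Q = p := by
    intro Q hJQ hQp
    by_contra hne
    have hQlt : Q < p := lt_of_le_of_ne hQp hne
    have hfin : Order.height Q < ⊤ :=
      lt_of_le_of_lt ((Order.height_mono hQp).trans_eq hpm)
        (by exact_mod_cast ENat.coe_lt_top m)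
    have h5 : Order.height Q < Order.height p := Order.height_strictMono hQlt hfin
    have h6 : (m : ℕ∞) ≤ Order.height Q := by
      have := idealHeight_le Q hJQ
      rw [hJ] at this
      exact_mod_cast this
    rw [hpm] at h5
    exact absurd h6 (not_le.mpr h5)
  -- pass to the quotient A = R ⧸ J
  set π := Ideal.Quotient.mk J with hπ
  have hker : RingHom.ker π = J := Ideal.mk_ker
  set pbar := Ideal.map π p.asIdeal with hpbar
  have hpbarprime : pbar.IsPrime :=
    Ideal.map_isPrime_of_surjective Ideal.Quotient.mk_surjective (by rw [hker]; exact hJp)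
  have hcomap : Ideal.comap π pbar = p.asIdeal := by
    rw [hpbar, Ideal.comap_map_of_surjective π Ideal.Quotient.mk_surjective]
    have hcb : Ideal.comap π ⊥ = J := by
      rw [← RingHom.ker_eq_comap_bot]
      exact hker
    rw [hcb]
    exact sup_eq_left.mpr hJp
  have hpbarne : pbar ≠ ⊤ := by
    intro h
    apply p.2.ne_top
    rw [← hcomap, h, Ideal.comap_top]
  set P : PrimeSpectrum (MvPolynomial (Fin (n + 1)) K ⧸ J) := ⟨pbar, hpbarprime⟩ with hP
  have hPmin : IsMin P := by
    intro Q hQP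
    have hq1 : J ≤ Ideal.comap π Q.asIdeal := by
      intro x hx
      have hx0 : π x = 0 := Ideal.Quotient.eq_zero_iff_mem.mpr hx
      rw [Ideal.mem_comap, hx0]
      exact Q.asIdeal.zero_mem
    have hq2 : Ideal.comap π Q.asIdeal ≤ p.asIdeal :=
      le_trans (Ideal.comap_mono hQP) hcomap.le
    have hq3 : (⟨Ideal.comap π Q.asIdeal, Ideal.IsPrime.comap π⟩ :
        PrimeSpectrum (MvPolynomial (Fin (n + 1)) K)) = p := hmin _ hq1 hq2
    have hq4 : Q.asIdeal = pbar := by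
      rw [← Ideal.map_comap_of_surjective π Ideal.Quotient.mk_surjective Q.asIdeal, hpbar]
      exact congrArg (Ideal.map π) (congrArg PrimeSpectrum.asIdeal hq3)
    show P.asIdeal ≤ Q.asIdeal
    rw [hq4]
  have hhtP : Order.height P = 0 := Order.height_eq_zero.mpr hPmin
  have hdht : idealHeight pbar ≤ 0 := by
    have := idealHeight_le P le_rfl
    rw [hhtP] at this
    exact this.trans_eq rfl
  -- f is regular mod J
  have hfreg : IsSMulRegular (MvPolynomial (Fin (n + 1)) K ⧸ J) (π f) := by
    intro a b hab
    obtain ⟨x, rfl⟩ := Ideal.Quotient.mk_surjective a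
    obtain ⟨y, rfl⟩ := Ideal.Quotient.mk_surjective b
    have hfxy : f * x - f * y ∈ J := by
      rw [← Ideal.Quotient.eq (I := J)]
      rw [map_mul, map_mul]
      simpa [smul_eq_mul] using hab
    have hmemc : (x - y) * f ∈ J := by
      have hring : (x - y) * f = f * x - f * y := by ring
      rw [hring]
      exact hfxy
    have hxy : x - y ∈ J := by
      rw [← hf]
      exact Ideal.mem_colon_span_singleton.mpr hmemc
    exact Ideal.Quotient.eq.mpr hxy
  have hfinp : π f ∈ pbar := Ideal.mem_map_of_mem π hfp
  have hreg : RingTheory.Sequence.IsRegular (MvPolynomial (Fin (n + 1)) K ⧸ J) [π f] := by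
    refine ⟨(RingTheory.Sequence.isWeaklyRegular_cons_iff _ _ _).mpr
      ⟨hfreg, RingTheory.Sequence.IsWeaklyRegular.nil _ _⟩, ?_⟩
    intro htop
    have hle : (Ideal.ofList [π f] • ⊤ :
        Submodule (MvPolynomial (Fin (n + 1)) K ⧸ J) (MvPolynomial (Fin (n + 1)) K ⧸ J)) ≤
        pbar := by
      refine Submodule.smul_le.mpr ?_
      intro r hr mm _
      have hrp : r ∈ pbar := by
        have hsp : Ideal.ofList [π f] ≤ pbar := by
          rw [Ideal.ofList_singleton, Ideal.span_le]
          intro x hx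
          rw [Set.mem_singleton_iff] at hx
          rw [hx]
          exact hfinp
        exact hsp hr
      rw [smul_eq_mul]
      exact Ideal.mul_mem_right mm pbar hrp
    rw [← htop] at hle
    exact hpbarne (top_le_iff.mp hle)
  have hdepth : (1 : ℕ∞) ≤ moduleDepth pbar (MvPolynomial (Fin (n + 1)) K ⧸ J) := by
    refine le_sSup ?_
    refine ⟨[π f], by simp, ?_, hreg⟩
    intro r hr
    rw [List.mem_singleton] at hr
    rw [hr]
    exact hfinp
  have hCMp := hCM pbar hpbarne
  have hge : (1 : WithBot ℕ∞) ≤ idealHeight pbar := by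
    rw [← hCMp]
    exact_mod_cast hdepth
  have hcontra : (1 : WithBot ℕ∞) ≤ 0 := hge.trans hdht
  exact absurd hcontra (by decide)
end

section
/- Let R = K[x₀,…,x₃], I_C = (x₀x₃ − x₁x₂, x₀x₂ − x₁², x₁x₃ − x₂²) the ideal of the twisted cubic, and c = (x₀x₃ − x₁x₂, x₀x₂ − x₁²) ⊆ I_C. Then c : I_C = (x₀, x₁). -/
open MvPolynomial

noncomputable def stmt16phi (K : Type*) [Field K] :
    MvPolynomial (Fin 4) K →ₐ[K] MvPolynomial (Fin 4) K :=
  aeval ![0, 0, X 2, X 3]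

lemma stmt16_sub_mem {K : Type*} [Field K] (p : MvPolynomial (Fin 4) K) :
    p - stmt16phi K p ∈ Ideal.span {X 0, X 1} := by
  induction p using MvPolynomial.induction_on with
  | C a => simp [stmt16phi]
  | add p q hp hq =>
      rw [map_add]
      have : p + q - (stmt16phi K p + stmt16phi K q)
          = (p - stmt16phi K p) + (q - stmt16phi K q) := by ring
      rw [this]; exact Ideal.add_mem _ hp hq
  | mul_X p i hp =>
      have hX : X i - stmt16phi K (X i) ∈ (Ideal.span {X 0, X 1} : Ideal (MvPolynomial (Fin 4) K)) := by
        fin_cases i <;> simp [stmt16phi] <;>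
          exact Ideal.subset_span (by simp)
      have : p * X i - stmt16phi K (p * X i)
          = (p - stmt16phi K p) * X i + stmt16phi K p * (X i - stmt16phi K (X i)) := by
        rw [map_mul]; ring
      rw [this]
      exact Ideal.add_mem _ (Ideal.mul_mem_right _ _ hp) (Ideal.mul_mem_left _ _ hX)

lemma stmt16_colon_aux {K : Type*} [Field K] (x : MvPolynomial (Fin 4) K)
    (hx : x * (X 1 * X 3 - X 2 ^ 2) ∈
      Ideal.span {X 0 * X 3 - X 1 * X 2, X 0 * X 2 - X 1 ^ 2}) :
    x ∈ Submodule.colon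
        (Ideal.span {X 0 * X 3 - X 1 * X 2, X 0 * X 2 - X 1 ^ 2} :
          Ideal (MvPolynomial (Fin 4) K))
        ((Ideal.span {X 0 * X 3 - X 1 * X 2, X 0 * X 2 - X 1 ^ 2, X 1 * X 3 - X 2 ^ 2} :
          Ideal (MvPolynomial (Fin 4) K)) : Set (MvPolynomial (Fin 4) K)) := by
  rw [Submodule.mem_colon]
  intro y hy
  rw [smul_eq_mul]
  induction hy using Submodule.span_induction with
  | mem z hz =>
      rcases hz with rfl | rfl | rfl
      · exact Ideal.mul_mem_left _ _ (Ideal.subset_span (by simp))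
      · exact Ideal.mul_mem_left _ _ (Ideal.subset_span (by simp))
      · exact hx
  | zero => simp
  | add a b _ _ ha hb => rw [mul_add]; exact Ideal.add_mem _ ha hb
  | smul r a _ ha =>
      rw [smul_eq_mul, mul_comm r a, ← mul_assoc]
      exact Ideal.mul_mem_right _ _ ha

/-- For the twisted cubic `I_C = (x₀x₃ − x₁x₂, x₀x₂ − x₁², x₁x₃ − x₂²)` and the complete
intersection `c = (x₀x₃ − x₁x₂, x₀x₂ − x₁²) ⊆ I_C`, one has `c : I_C = (x₀, x₁)`. -/
theorem stmt_16 {K : Type*} [Field K] :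
    Submodule.colon
        (Ideal.span {X 0 * X 3 - X 1 * X 2, X 0 * X 2 - X 1 ^ 2} :
          Ideal (MvPolynomial (Fin 4) K))
        ((Ideal.span {X 0 * X 3 - X 1 * X 2, X 0 * X 2 - X 1 ^ 2, X 1 * X 3 - X 2 ^ 2} :
          Ideal (MvPolynomial (Fin 4) K)) : Set (MvPolynomial (Fin 4) K)) =
      Ideal.span {X 0, X 1} := by
  apply le_antisymm
  · intro p hp
    have hmem : (X 1 * X 3 - X 2 ^ 2 : MvPolynomial (Fin 4) K) ∈
        Ideal.span {X 0 * X 3 - X 1 * X 2, X 0 * X 2 - X 1 ^ 2, X 1 * X 3 - X 2 ^ 2} :=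
      Ideal.subset_span (by simp)
    have h1 : p * (X 1 * X 3 - X 2 ^ 2) ∈
        Ideal.span {X 0 * X 3 - X 1 * X 2, X 0 * X 2 - X 1 ^ 2} := by
      simpa using Submodule.mem_colon.mp hp _ hmem
    have hker : (Ideal.span {X 0 * X 3 - X 1 * X 2, X 0 * X 2 - X 1 ^ 2} :
        Ideal (MvPolynomial (Fin 4) K)) ≤ RingHom.ker (stmt16phi K).toRingHom := by
      rw [Ideal.span_le]
      rintro x (rfl | rfl) <;> simp [RingHom.mem_ker, stmt16phi]
    have h2 : stmt16phi K (p * (X 1 * X 3 - X 2 ^ 2)) = 0 := hker h1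
    rw [map_mul] at h2
    have hφh : stmt16phi K (X 1 * X 3 - X 2 ^ 2) = -(X 2 ^ 2) := by simp [stmt16phi]
    rw [hφh] at h2
    have h3 : stmt16phi K p = 0 := by
      rcases mul_eq_zero.mp h2 with h | h
      · exact h
      · exact absurd (neg_eq_zero.mp h) (pow_ne_zero _ (X_ne_zero 2))
    have := stmt16_sub_mem (K := K) p
    rwa [h3, sub_zero] at this
  · rw [Ideal.span_le]
    rintro x (rfl | rfl)
    · exact stmt16_colon_aux _ (Ideal.mem_span_pair.mpr ⟨X 1, -X 2, by ring⟩)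
    · exact stmt16_colon_aux _ (Ideal.mem_span_pair.mpr ⟨X 2, -X 3, by ring⟩)
end

section
/- Let R = K[x₀,…,xₙ] and let I₁, I₂ be complete intersections of the same codimension c of the form I₁ = (F₁,…,F_{c−1}, F) and I₂ = (F₁,…,F_{c−1}, G), where (F₁,…,F_{c−1}, FG) is also a complete intersection X. Then I₁ and I₂ are directly linked by X: (F₁,…,F_{c−1},FG) : I₁ = I₂ and (F₁,…,F_{c−1},FG) : I₂ = I₁. -/
open MvPolynomial

lemma aux_reg_last {R : Type*} [CommRing R] (l : List R) (F : R)
    (h : RingTheory.Sequence.IsWeaklyRegular R (l ++ [F])) :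
    ∀ z : R, F * z ∈ Ideal.ofList l → z ∈ Ideal.ofList l := by
  intro z hz
  have hlen : l.length < (l ++ [F]).length := by simp
  have hr := h.regular_mod_prev l.length hlen
  have hget : (l ++ [F])[l.length] = F := by simp
  have htake : (l ++ [F]).take l.length = l := by simp
  rw [hget, htake] at hr
  have hJ : (Ideal.ofList l • ⊤ : Submodule R R) = Ideal.ofList l := by
    simp [Ideal.smul_top_eq_map]
  have h0 : F • (Submodule.Quotient.mk z :
      R ⧸ (Ideal.ofList l • ⊤ : Submodule R R)) = F • (0 : _) := by
    rw [smul_zero, ← Submodule.Quotient.mk_smul, Submodule.Quotient.mk_eq_zero, hJ]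
    simpa [smul_eq_mul] using hz
  have := hr h0
  rw [Submodule.Quotient.mk_eq_zero, hJ] at this
  exact this

lemma aux_colon {R : Type*} [CommRing R] (J : Ideal R) (F G : R)
    (hF : ∀ z : R, F * z ∈ J → z ∈ J) :
    Submodule.colon (J ⊔ Ideal.span {F * G}) ((J ⊔ Ideal.span {F} : Ideal R) : Set R)
      = J ⊔ Ideal.span {G} := by
  apply le_antisymm
  · intro r hr
    rw [Submodule.mem_colon] at hr
    have hrF : r * F ∈ J ⊔ Ideal.span {F * G} := by
      simpa [smul_eq_mul] using hr F (SetLike.mem_coe.2 (Submodule.mem_sup_right (Ideal.mem_span_singleton_self F)))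
    rw [Submodule.mem_sup] at hrF
    obtain ⟨j, hj, y, hy, hsum⟩ := hrF
    rw [Ideal.mem_span_singleton] at hy
    obtain ⟨a, rfl⟩ := hy
    have hmem : F * (r - G * a) ∈ J := by
      have : F * (r - G * a) = j := by linear_combination -hsum
      rw [this]; exact hj
    have := hF _ hmem
    rw [Submodule.mem_sup]
    exact ⟨r - G * a, this, G * a, Ideal.mem_span_singleton.2 ⟨a, rfl⟩, by ring⟩
  · intro r hr
    rw [Submodule.mem_colon]
    intro p hp
    rw [Submodule.mem_sup] at hr
    rw [SetLike.mem_coe, Submodule.mem_sup] at hp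
    obtain ⟨j1, hj1, y1, hy1, rfl⟩ := hr
    obtain ⟨j2, hj2, y2, hy2, rfl⟩ := hp
    rw [Ideal.mem_span_singleton] at hy1 hy2
    obtain ⟨a, rfl⟩ := hy1
    obtain ⟨b, rfl⟩ := hy2
    rw [smul_eq_mul]
    have : (j1 + G * a) * (j2 + F * b) =
        (j1 * (j2 + F * b) + (G * a) * j2) + (F * G) * (a * b) := by ring
    rw [this]
    exact Submodule.add_mem _
      (Submodule.mem_sup_left (Ideal.add_mem _ (Ideal.mul_mem_right _ _ hj1)
        (Ideal.mul_mem_left _ _ hj2)))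
      (Submodule.mem_sup_right (Ideal.mem_span_singleton.2 ⟨a * b, rfl⟩))

/-- If `I₁ = (F₁,…,F_{c−1}, F)` and `I₂ = (F₁,…,F_{c−1}, G)` are complete intersections
of codimension `c` such that `X = (F₁,…,F_{c−1}, FG)` is also a complete intersection,
then `X : I₁ = I₂` and `X : I₂ = I₁`, i.e. `I₁` and `I₂` are directly linked by `X`.
Here `c = k + 1` and `Fs : Fin k → R` lists `F₁, …, F_{c−1}`. -/
theorem stmt_19 {K : Type*} [Field K] (n k : ℕ)
    (Fs : Fin k → MvPolynomial (Fin (n + 1)) K)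
    (F G : MvPolynomial (Fin (n + 1)) K)
    (degs : Fin k → ℕ) (dF dG : ℕ)
    (hFs : ∀ i, (Fs i).IsHomogeneous (degs i))
    (hF : F.IsHomogeneous dF) (hG : G.IsHomogeneous dG)
    (hreg₁ : RingTheory.Sequence.IsRegular (MvPolynomial (Fin (n + 1)) K)
      (List.ofFn Fs ++ [F]))
    (hreg₂ : RingTheory.Sequence.IsRegular (MvPolynomial (Fin (n + 1)) K)
      (List.ofFn Fs ++ [G]))
    (hregX : RingTheory.Sequence.IsRegular (MvPolynomial (Fin (n + 1)) K)
      (List.ofFn Fs ++ [F * G])) :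
    Submodule.colon (Ideal.span (Set.range Fs ∪ {F * G}))
        (Ideal.span (Set.range Fs ∪ {F})) = Ideal.span (Set.range Fs ∪ {G}) ∧
    Submodule.colon (Ideal.span (Set.range Fs ∪ {F * G}))
        (Ideal.span (Set.range Fs ∪ {G})) = Ideal.span (Set.range Fs ∪ {F}) := by
  have hJ : Ideal.ofList (List.ofFn Fs) = Ideal.span (Set.range Fs) := by
    have hset : {r : MvPolynomial (Fin (n + 1)) K | r ∈ List.ofFn Fs} = Set.range Fs := by
      ext x; simp [List.mem_ofFn]
    show Ideal.span {r | r ∈ List.ofFn Fs} = _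
    rw [hset]
  have hsp : ∀ H : MvPolynomial (Fin (n + 1)) K, Ideal.span (Set.range Fs ∪ {H})
      = Ideal.span (Set.range Fs) ⊔ Ideal.span {H} := fun H => by
    rw [Ideal.span_union]
  have hF' : ∀ z : MvPolynomial (Fin (n + 1)) K, F * z ∈ Ideal.span (Set.range Fs) → z ∈ Ideal.span (Set.range Fs) := by
    intro z hz
    rw [← hJ] at hz ⊢
    exact aux_reg_last _ _ hreg₁.toIsWeaklyRegular z hz
  have hG' : ∀ z : MvPolynomial (Fin (n + 1)) K, G * z ∈ Ideal.span (Set.range Fs) → z ∈ Ideal.span (Set.range Fs) := by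
    intro z hz
    rw [← hJ] at hz ⊢
    exact aux_reg_last _ _ hreg₂.toIsWeaklyRegular z hz
  constructor
  · rw [hsp F, hsp G, hsp (F * G)]
    exact aux_colon _ F G hF'
  · rw [hsp F, hsp G, hsp (F * G)]
    have : F * G = G * F := mul_comm F G
    rw [this]
    exact aux_colon _ G F hG'
end
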